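/- Let g = V₁ ⊕ ⋯ ⊕ V_κ be a stratified Lie algebra of type ⋆ with dim V₁ = m. Then dim V₃ ≤ (1/3)m(m−1)(m−2). -/

import Mathlib

open Submodule Module

/-- The span of brackets `⁅a, b⁆` with `a ∈ A`, `b ∈ B`. -/
def bracketSpan {g : Type*} [LieRing g] [LieAlgebra ℝ g] (A B : Submodule ℝ g) :
    Submodule ℝ g :=
  Submodule.span ℝ {x : g | ∃ a ∈ A, ∃ b ∈ B, x = ⁅a, b⁆}



private lemma bracket_mem_span' {g : Type*} [LieRing g] [LieAlgebra ℝ g]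
    (s t : Set g) {a b : g} (ha : a ∈ span ℝ s) (hb : b ∈ span ℝ t) :
    ⁅a, b⁆ ∈ span ℝ {w : g | ∃ y ∈ s, ∃ z ∈ t, w = ⁅y, z⁆} := by
  induction ha using Submodule.span_induction with
  | mem y hy =>
    induction hb using Submodule.span_induction with
    | mem z hz => exact subset_span ⟨y, hy, z, hz, rfl⟩
    | zero => simp
    | add u v _ _ hu hv => rw [lie_add]; exact add_mem hu hv
    | smul r u _ hu => rw [lie_smul]; exact smul_mem _ _ hu
  | zero => simp
  | add u v _ _ hu hv => rw [add_lie]; exact add_mem hu hv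
  | smul r u _ hu => rw [smul_lie]; exact smul_mem _ _ hu

private lemma key_mem {g : Type*} [LieRing g] [LieAlgebra ℝ g] {m : ℕ} (x : Fin m → g)
    (hstar : ∀ i j : Fin m, ⁅x j, ⁅x j, x i⁆⁆ = 0)
    (S : Submodule ℝ g)
    (hgen : ∀ p q r : Fin m, p < q → q < r →
      ⁅x r, ⁅x q, x p⁆⁆ ∈ S ∧ ⁅x q, ⁅x r, x p⁆⁆ ∈ S) :
    ∀ k j i : Fin m, ⁅x k, ⁅x j, x i⁆⁆ ∈ S := by
  have hA : ∀ a b c : Fin m, ⁅x a, ⁅x b, x c⁆⁆ = -⁅x a, ⁅x c, x b⁆⁆ := by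
    intro a b c
    rw [show ⁅x b, x c⁆ = -⁅x c, x b⁆ from (lie_skew _ _).symm, lie_neg]
  have hJ : ∀ a b c : g, ⁅a, ⁅b, c⁆⁆ = ⁅b, ⁅a, c⁆⁆ - ⁅c, ⁅a, b⁆⁆ := by
    intro a b c
    rw [leibniz_lie, show ⁅⁅a,b⁆,c⁆ = -⁅c,⁅a,b⁆⁆ from (lie_skew _ _).symm]
    abel
  intro k j i
  by_cases hji : j = i
  · subst hji; simp
  by_cases hkj : k = j
  · subst hkj; rw [hstar]; exact zero_mem S
  by_cases hki : k = i
  · subst hki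
    rw [hJ (x k) (x j) (x k), lie_self, lie_zero, hstar]
    simp
  have n1 : j ≠ i := hji
  have n2 : k ≠ j := hkj
  have n3 : k ≠ i := hki
  rcases n1.lt_or_gt with h1 | h1 <;> rcases n2.lt_or_gt with h2 | h2 <;>
    rcases n3.lt_or_gt with h3 | h3
  · -- j < i, k < j, k < i : k < j < i
    rw [hA k j i]
    apply neg_mem
    rw [hJ, hA i k j, hA j k i]
    exact sub_mem (neg_mem (hgen k j i h2 h1).1) (neg_mem (hgen k j i h2 h1).2)
  · exact absurd h3 (not_lt.2 (h2.trans h1).le)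
  · -- j < i, j < k, k < i : j < k < i
    rw [hA k j i]
    exact neg_mem (hgen j k i h2 h3).2
  · -- j < i, j < k, i < k : j < i < k
    rw [hA k j i]
    exact neg_mem (hgen j i k h1 h3).1
  · -- i < j, k < j, k < i : k < i < j
    rw [hJ, hA j k i, hA i k j]
    exact sub_mem (neg_mem (hgen k i j h3 h1).1) (neg_mem (hgen k i j h3 h1).2)
  · -- i < j, k < j, i < k : i < k < j
    exact (hgen i k j h3 h2).2
  · exact absurd h3 (not_lt.2 (h1.trans h2).le)
  · -- i < j < k
    exact (hgen i j k h1 h2).1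


private lemma cardT_le (m : ℕ) :
    Fintype.card {t : Fin m × Fin m × Fin m // t.2.2 < t.2.1 ∧ t.2.1 < t.1} ≤
      Nat.choose m 3 := by
  have hcard := Fintype.card_finset_len (α := Fin m) 3
  rw [Fintype.card_fin] at hcard
  rw [← hcard]
  have hinj : Function.Injective
      (fun t : {t : Fin m × Fin m × Fin m // t.2.2 < t.2.1 ∧ t.2.1 < t.1} =>
        (⟨{t.1.1, t.1.2.1, t.1.2.2}, by
          rcases t with ⟨⟨k, j, i⟩, h1, h2⟩
          exact Finset.card_eq_three.mpr ⟨k, j, i, h2.ne', (h1.trans h2).ne', h1.ne', rfl⟩⟩ :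
          {s : Finset (Fin m) // s.card = 3})) := by
    rintro ⟨⟨k, j, i⟩, h1, h2⟩ ⟨⟨k', j', i'⟩, h1', h2'⟩ hab
    simp only [Subtype.mk.injEq] at hab
    have m1 : k = k' ∨ k = j' ∨ k = i' := by
      have : k ∈ ({k', j', i'} : Finset (Fin m)) := hab ▸ (by simp)
      simpa using this
    have m2 : j = k' ∨ j = j' ∨ j = i' := by
      have : j ∈ ({k', j', i'} : Finset (Fin m)) := hab ▸ (by simp)
      simpa using this
    have m3 : i = k' ∨ i = j' ∨ i = i' := by
      have : i ∈ ({k', j', i'} : Finset (Fin m)) := hab ▸ (by simp)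
      simpa using this
    simp only [Fin.ext_iff] at m1 m2 m3
    simp only [Fin.lt_def] at h1 h2 h1' h2'
    apply Subtype.ext
    simp only [Prod.mk.injEq, Fin.ext_iff]
    omega
  exact Fintype.card_le_of_injective _ hinj

/-- In a stratified Lie algebra of type ⋆ (i.e. having a basis `(X₁, …, X_m)` of the first
layer with `⁅X_j, ⁅X_j, X_i⁆⁆ = 0` for all `i, j`) one has `dim V₃ ≤ (1/3)m(m-1)(m-2)`,
stated without division as `3 dim V₃ ≤ m(m-1)(m-2)`. -/

theorem stmt_10 {g : Type*} [LieRing g] [LieAlgebra ℝ g] (m : ℕ)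
    (V : ℕ → Submodule ℝ g)
    (hstrat : ∀ i ≥ 1, bracketSpan (V 1) (V i) = V (i + 1))
    (hstar : ∃ X : Basis (Fin m) ℝ (V 1),
      ∀ i j : Fin m, ⁅(X j : g), ⁅(X j : g), (X i : g)⁆⁆ = 0) :
    3 * Module.finrank ℝ (V 3) ≤ m * (m - 1) * (m - 2) := by
  classical
  obtain ⟨X, hstar⟩ := hstar
  set x : Fin m → g := fun i => (X i : g) with hx
  -- V 1 is contained in the span of the basis vectors
  have hV1 : V 1 ≤ span ℝ (Set.range x) := by
    have hrx : Set.range x = (V 1).subtype '' Set.range X := by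
      ext w; simp [hx]
    have : span ℝ (Set.range x) = V 1 := by
      rw [hrx, ← Submodule.map_span, X.span_eq, Submodule.map_top, Submodule.range_subtype]
    exact this.ge
  -- the type of increasing triples
  set T := {t : Fin m × Fin m × Fin m // t.2.2 < t.2.1 ∧ t.2.1 < t.1} with hT
  set f : Bool × T → g := fun p =>
    if p.1 then ⁅x p.2.1.1, ⁅x p.2.1.2.1, x p.2.1.2.2⁆⁆
    else ⁅x p.2.1.2.1, ⁅x p.2.1.1, x p.2.1.2.2⁆⁆ with hf
  set S : Submodule ℝ g := span ℝ (Set.range f) with hS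
  have hgen : ∀ p q r : Fin m, p < q → q < r →
      ⁅x r, ⁅x q, x p⁆⁆ ∈ S ∧ ⁅x q, ⁅x r, x p⁆⁆ ∈ S := by
    intro p q r h1 h2
    constructor
    · exact subset_span ⟨(true, ⟨(r, q, p), h1, h2⟩), by simp [hf]⟩
    · exact subset_span ⟨(false, ⟨(r, q, p), h1, h2⟩), by simp [hf]⟩
  have hkey := key_mem x hstar S hgen
  -- V 2 is spanned by brackets of basis vectors
  have e12 := hstrat 1 le_rfl
  have e23 := hstrat 2 (by norm_num)
  norm_num at e12 e23
  set B2 : Fin m × Fin m → g := fun p => ⁅x p.1, x p.2⁆ with hB2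
  have hV2 : V 2 ≤ span ℝ (Set.range B2) := by
    rw [← e12, bracketSpan]
    apply Submodule.span_le.mpr
    rintro w ⟨a, ha, b, hb, rfl⟩
    refine Submodule.span_mono ?_ (bracket_mem_span' _ _ (hV1 ha) (hV1 hb))
    rintro w ⟨y, ⟨i, rfl⟩, z, ⟨j, rfl⟩, rfl⟩
    exact ⟨(i, j), rfl⟩
  -- V 3 is contained in S
  have hV3 : V 3 ≤ S := by
    rw [← e23, bracketSpan]
    apply Submodule.span_le.mpr
    rintro w ⟨a, ha, b, hb, rfl⟩
    have h := bracket_mem_span' _ _ (hV1 ha) (hV2 hb)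
    refine Submodule.span_le.mpr ?_ h
    rintro w ⟨y, ⟨k, rfl⟩, z, ⟨⟨j, i⟩, rfl⟩, rfl⟩
    exact hkey k j i
  -- dimension counting
  haveI : Module.Finite ℝ S := FiniteDimensional.span_of_finite ℝ (Set.finite_range f)
  have d1 : finrank ℝ (V 3) ≤ finrank ℝ S := Submodule.finrank_mono hV3
  have d2 : finrank ℝ S ≤ Fintype.card (Bool × T) := by
    have := finrank_range_le_card (R := ℝ) f
    rwa [Set.finrank] at this
  have d3 : Fintype.card (Bool × T) = 2 * Fintype.card T := by
    rw [Fintype.card_prod, Fintype.card_bool]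
  have d4 : Fintype.card T ≤ Nat.choose m 3 := cardT_le m
  have d5 : 6 * Nat.choose m 3 = m * (m - 1) * (m - 2) := by
    have h := Nat.descFactorial_eq_factorial_mul_choose m 3
    have h2 : Nat.descFactorial m 3 = m * (m - 1) * (m - 2) := by
      show (m - 2) * ((m - 1) * (m * 1)) = m * (m - 1) * (m - 2)
      ring
    rw [h2] at h
    norm_num [Nat.factorial] at h
    omega
  omega
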